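/- Let x ∈ F₂ⁿ with Hamming weight ω_H(x) > 2, and let D_n(x) = {0, x} ∪ {e_i : i ∈ Fin n}. Then D_n(x) is not equal to B_d(0,r) for any TS-metric d on F₂ⁿ and any r > 0. -/

import Mathlib

/-!
Since a TS-weight is monotone in the support, a TS-ball centred at `0` contains, with any
vector `y`, every vector whose support lies in that of `y`. If `i, j, k` are three
coordinates in the support of `x`, then `e_i + e_j` lies below `x` in this sense, but it is
neither `0`, nor `x` (it misses `k`), nor a unit vector.
-/

open Set Function

/-- A weight on a binary vector space `ι → ZMod 2`. -/
def IsWeight {ι : Type*} (ω : (ι → ZMod 2) → ℝ) : Prop :=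
  (∀ x, 0 ≤ ω x) ∧ (∀ x, ω x = 0 ↔ x = 0) ∧ ∀ x y, ω (x + y) ≤ ω x + ω y

/-- A function respects the support of vectors. -/
def RespectsSupport {ι : Type*} (ω : (ι → ZMod 2) → ℝ) : Prop :=
  ∀ x y : ι → ZMod 2, Function.support x ⊆ Function.support y → ω x ≤ ω y

/-- A TS-metric: a (translation-invariant) metric determined by a weight
that respects support, i.e. `d x y = ω (x + y)` (note `-y = y` in char 2). -/
def IsTSMetric {ι : Type*} (d : (ι → ZMod 2) → (ι → ZMod 2) → ℝ) : Prop :=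
  ∃ ω, IsWeight ω ∧ RespectsSupport ω ∧ ∀ x y, d x y = ω (x + y)

/-- The ball `B_d(x, r)`. -/
def tsBall {ι : Type*} (d : (ι → ZMod 2) → (ι → ZMod 2) → ℝ) (x : ι → ZMod 2) (r : ℝ) :
    Set (ι → ZMod 2) := {y | d x y ≤ r}

/-- `(D, C)` is a tiling: the translates `c + D`, `c ∈ C`, are pairwise disjoint
and cover the whole space. -/
def IsTiling {ι : Type*} (D C : Set (ι → ZMod 2)) : Prop :=
  (⋃ c ∈ C, (c + ·) '' D) = Set.univ ∧
  C.Pairwise fun c c' => Disjoint ((c + ·) '' D) ((c' + ·) '' D)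

/-- `C` is a `(d, r)`-perfect code: the balls of radius `r` centered at codewords
are pairwise disjoint and cover the whole space. -/
def IsPerfectCode {ι : Type*} (d : (ι → ZMod 2) → (ι → ZMod 2) → ℝ) (r : ℝ)
    (C : Set (ι → ZMod 2)) : Prop :=
  (⋃ c ∈ C, tsBall d c r) = Set.univ ∧
  C.Pairwise fun c c' => Disjoint (tsBall d c r) (tsBall d c' r)

/-- A polyhedromino: any two points of `D` are joined by a geodesic path
(w.r.t. the Hamming distance) lying inside `D`. -/
def IsPolyhedromino {ι : Type*} [Fintype ι] (D : Set (ι → ZMod 2)) : Prop :=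
  ∀ x ∈ D, ∀ y ∈ D, ∃ γ : ℕ → (ι → ZMod 2),
    γ 0 = x ∧ γ (hammingDist x y) = y ∧
    (∀ i ≤ hammingDist x y, γ i ∈ D) ∧
    ∀ i < hammingDist x y, hammingDist (γ i) (γ (i + 1)) = 1

/-- A poly-tiling: a tiling whose tile is a polyhedromino. -/
def IsPolyTiling {ι : Type*} [Fintype ι] (D C : Set (ι → ZMod 2)) : Prop :=
  IsTiling D C ∧ IsPolyhedromino D

/-- The vector `e_i` with support `{i}`. -/
def unitVec {ι : Type*} [DecidableEq ι] (i : ι) : ι → ZMod 2 := Pi.single i 1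

/-- The `F`-combinatorial weight: the minimal number of members of `F` needed
to cover the support of `x`. -/
noncomputable def combWeight {ι : Type*} [DecidableEq ι] (F : Finset (Finset ι))
    (x : ι → ZMod 2) : ℕ :=
  sInf {k | ∃ A : Finset (Finset ι), A ⊆ F ∧ A.card = k ∧ Function.support x ⊆ ↑(A.sup id)}

/-- The axioms of a metric. -/
def IsMetric {α : Type*} (d : α → α → ℝ) : Prop :=
  (∀ x y, d x y = 0 ↔ x = y) ∧ (∀ x y, d x y = d y x) ∧ ∀ x y z, d x z ≤ d x y + d y z

/-- The max-metric on the product (concatenation) space, identified with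
functions on `Fin n ⊕ Fin m`. -/
def dmax {n m : ℕ} (d₁ : (Fin n → ZMod 2) → (Fin n → ZMod 2) → ℝ)
    (d₂ : (Fin m → ZMod 2) → (Fin m → ZMod 2) → ℝ)
    (w w' : Fin n ⊕ Fin m → ZMod 2) : ℝ :=
  max (d₁ (fun i => w (Sum.inl i)) (fun i => w' (Sum.inl i)))
      (d₂ (fun j => w (Sum.inr j)) (fun j => w' (Sum.inr j)))

section

variable {ι : Type*}

theorem IsTSMetric.mem_tsBall_zero_of_support_subset {d : (ι → ZMod 2) → (ι → ZMod 2) → ℝ}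
    (hd : IsTSMetric d) {r : ℝ} {y z : ι → ZMod 2} (hy : y ∈ tsBall d 0 r)
    (hzy : support z ⊆ support y) : z ∈ tsBall d 0 r := by
  obtain ⟨ω, -, hω, hdω⟩ := hd
  simp only [tsBall, mem_ofPred_eq, hdω, zero_add] at hy ⊢
  exact (hω z y hzy).trans hy

variable [DecidableEq ι]

theorem support_unitVec (i : ι) : support (unitVec i) = {i} :=
  Pi.support_single_of_ne one_ne_zero

theorem support_unitVec_add_unitVec {i j : ι} (hij : i ≠ j) :
    support (unitVec i + unitVec j) = {i, j} := by
  ext l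
  by_cases hli : l = i <;> by_cases hlj : l = j <;> simp_all [unitVec]

theorem unitVec_add_unitVec_notMem {x : ι → ZMod 2} {i j k : ι} (hk : k ∈ support x)
    (hij : i ≠ j) (hik : i ≠ k) (hjk : j ≠ k) :
    unitVec i + unitVec j ∉ ({0, x} ∪ range unitVec : Set (ι → ZMod 2)) := by
  have hsupp := support_unitVec_add_unitVec hij
  rintro ((h0 | rfl) | ⟨l, hl⟩)
  · rw [show unitVec i + unitVec j = 0 from h0, support_zero] at hsupp
    exact (insert_nonempty i {j}).ne_empty hsupp.symm
  · rw [hsupp] at hk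
    simp [hik.symm, hjk.symm] at hk
  · rw [← hl, support_unitVec] at hsupp
    have hil : i ∈ ({l} : Set ι) := hsupp ▸ mem_insert i {j}
    have hjl : j ∈ ({l} : Set ι) := hsupp ▸ mem_insert_of_mem i rfl
    exact hij ((eq_of_mem_singleton hil).trans (eq_of_mem_singleton hjl).symm)

end

theorem stmt_11_general {n : ℕ} (x : Fin n → ZMod 2) (hx : 2 < hammingNorm x)
    (d : (Fin n → ZMod 2) → (Fin n → ZMod 2) → ℝ) (r : ℝ)
    (hd : IsTSMetric d) :
    tsBall d 0 r ≠ {0, x} ∪ Set.range (fun i : Fin n => unitVec i) := by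
  intro hball
  obtain ⟨i, j, k, hi, hj, hk, hij, hik, hjk⟩ := Finset.two_lt_card_iff.mp hx
  simp only [Finset.mem_filter, Finset.mem_univ, true_and] at hi hj hk
  have hsub : support (unitVec i + unitVec j) ⊆ support x := by
    rw [support_unitVec_add_unitVec hij]
    exact insert_subset hi (singleton_subset_iff.2 hj)
  have hx_mem : x ∈ tsBall d 0 r := hball ▸ Or.inl (Or.inr rfl)
  exact unitVec_add_unitVec_notMem hk hij hik hjk
    (hball ▸ hd.mem_tsBall_zero_of_support_subset hx_mem hsub)

/-- if `ω_H(x) > 2`, then `D_n(x) = {0, x} ∪ {e_i : i}` is not a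
TS-ball centered at `0`. -/
theorem stmt_11 {n : ℕ} (x : Fin n → ZMod 2) (hx : 2 < hammingNorm x)
    (d : (Fin n → ZMod 2) → (Fin n → ZMod 2) → ℝ) (r : ℝ)
    (hd : IsTSMetric d) (hr : 0 < r) :
    tsBall d 0 r ≠ {0, x} ∪ Set.range (fun i : Fin n => unitVec i) :=
  stmt_11_general x hx d r hd
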